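/- arXiv:2112.04551 — 3 statements merged into one kernel-verified Lean document; each statement's English description precedes it below -/
import Mathlib

section
/- For natural numbers R, t, ℓ' with t ≤ R, the sum over n' from 0 to 2R - 2t of C(n' + ℓ', n') * C(2R - ℓ' - n', 2R - 2t - n') equals C(2R + 1, 2t + 1). -/
/-!
Compare the coefficients of `X ^ m` in `(1 - X)⁻¹ ^ (a + 1) * (1 - X)⁻¹ ^ (b + 1) = (1 - X)⁻¹ ^ (a + b + 2)`:
this gives the upper Chu–Vandermonde identity `∑_{i+j=m} C(a+i, a) C(b+j, b) = C(a+b+1+m, a+b+1)`.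
The theorem is the case `a = ℓ'`, `b = 2t - ℓ'`, `m = 2R - 2t`, after `C(n, k) = C(n, n - k)` on both
factors.
-/

open Finset PowerSeries

theorem Finset.Nat.sum_antidiagonal_add_choose_mul_add_choose (a b m : ℕ) :
    ∑ ij ∈ antidiagonal m, (a + ij.1).choose a * (b + ij.2).choose b =
      (a + b + 1 + m).choose (a + b + 1) := by
  have h := congrArg (fun f : ℤ⟦X⟧ˣ ↦ coeff m f.val) (invOneSubPow_add ℤ (a + 1) (b + 1))
  simp only [Units.val_mul, coeff_mul, invOneSubPow_val_succ_eq_mk_add_choose, coeff_mk,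
    show a + 1 + (b + 1) = a + b + 1 + 1 by ring] at h
  exact_mod_cast h.symm

theorem stmt_1 (R t ℓ' : ℕ) (ht : t ≤ R) (hℓ : ℓ' ≤ 2*t) :
    ∑ n' ∈ Finset.range (2*R - 2*t + 1),
      (n' + ℓ').choose n' * (2*R - ℓ' - n').choose (2*R - 2*t - n')
      = (2*R + 1).choose (2*t + 1) := by
  have key := Nat.sum_antidiagonal_add_choose_mul_add_choose ℓ' (2*t - ℓ') (2*R - 2*t)
  rw [Nat.sum_antidiagonal_eq_sum_range_succ_mk] at key
  convert key using 1
  · refine sum_congr rfl fun n hn ↦ ?_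
    have hn : n ≤ 2*R - 2*t := Nat.lt_succ_iff.mp (mem_range.mp hn)
    rw [show 2*R - ℓ' - n = 2*R - 2*t - n + (2*t - ℓ') by omega, Nat.choose_symm_add,
      Nat.choose_symm_add, add_comm n, add_comm (2*R - 2*t - n)]
  · congr 1 <;> omega
end

section
/- Expected queue length formula: if N has the pmf p(n) = C(n-m, ℓ-m) * C(2R+m-n, 2t+m-ℓ) / C(2R+1, 2t+1) on n ∈ {ℓ, ..., 2R-2t+ℓ}, then E[N] = ∑ n·p(n) = ℓ + (ℓ - m + 1)(R - t)/(t + 1). -/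
/-!
Substituting `n = ℓ + k`, `a = ℓ - m`, `b = 2t - a`, `K = 2R - 2t`, the weights become
`C(a + k, a) * C(b + (K - k), b)`, which sum to `C(2R + 1, 2t + 1)` by comparing coefficients in
`(1 - X)^-(a+1) * (1 - X)^-(b+1) = (1 - X)^-(a+b+2)`. The absorption identity
`(a + 1 + k) * C(a + k, a) = (a + 1) * C(a + 1 + k, a + 1)` turns the first moment into the same
kind of sum with `a + 1` in place of `a`, so the mean of `k` is `(a + 1) * K / (a + b + 2)`.
-/

open Finset PowerSeries

namespace Nat

theorem sum_range_add_choose_mul_add_choose (a b K : ℕ) :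
    ∑ k ∈ range (K + 1), (a + k).choose a * (b + (K - k)).choose b
      = (a + b + 1 + K).choose (a + b + 1) := by
  have h : (mk 1 : ℤ⟦X⟧) ^ (a + 1) * (mk 1 : ℤ⟦X⟧) ^ (b + 1)
      = (mk 1 : ℤ⟦X⟧) ^ (a + b + 1 + 1) := by
    rw [← pow_add]; ring_nf
  simp only [mk_one_pow_eq_mk_choose_add] at h
  have h_coeff := congrArg (coeff K) h
  simp only [coeff_mul, coeff_mk, Finset.Nat.sum_antidiagonal_eq_sum_range_succ_mk] at h_coeff
  exact_mod_cast h_coeff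

theorem sum_range_mul_add_choose_mul_add_choose (a b K : ℕ) :
    (a + b + 2) * ∑ k ∈ range (K + 1), k * ((a + k).choose a * (b + (K - k)).choose b)
      = (a + 1) * K * (a + b + 1 + K).choose (a + b + 1) := by
  have absorb (k : ℕ) :
      (a + 1 + k) * (a + k).choose a = (a + 1) * (a + 1 + k).choose (a + 1) := by
    rw [add_right_comm, add_one_mul_choose_eq, mul_comm]
  have first_moment :
      (a + 1) * (a + b + 1 + K).choose (a + b + 1)
        + ∑ k ∈ range (K + 1), k * ((a + k).choose a * (b + (K - k)).choose b)
      = (a + 1) * (a + b + 2 + K).choose (a + b + 2) := by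
    rw [← sum_range_add_choose_mul_add_choose, mul_sum, ← sum_add_distrib]
    simp_rw [← add_mul, ← mul_assoc, absorb, mul_assoc, ← mul_sum,
      sum_range_add_choose_mul_add_choose]
    ring_nf
  have pascal := add_one_mul_choose_eq (a + b + 1 + K) (a + b + 1)
  rw [show a + b + 1 + K + 1 = a + b + 2 + K by omega,
    show a + b + 1 + 1 = a + b + 2 by omega] at pascal
  zify at first_moment pascal ⊢
  linear_combination (a + b + 2 : ℤ) * first_moment - (a + 1 : ℤ) * pascal

theorem sum_range_add_mul_choose_mul_choose_div (ℓ a b K : ℕ) :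
    ∑ k ∈ range (K + 1), ((ℓ + k : ℕ) : ℚ) *
        ((a + k).choose a * (b + (K - k)).choose b / (a + b + 1 + K).choose (a + b + 1) : ℚ)
      = ℓ + (a + 1) * K / (a + b + 2 : ℚ) := by
  have hD : ((a + b + 1 + K).choose (a + b + 1) : ℚ) ≠ 0 := by
    exact_mod_cast (choose_pos (by omega)).ne'
  have total := congrArg (Nat.cast : ℕ → ℚ) (sum_range_add_choose_mul_add_choose a b K)
  have moment := congrArg (Nat.cast : ℕ → ℚ) (sum_range_mul_add_choose_mul_add_choose a b K)
  push_cast [← mul_assoc] at total moment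
  simp_rw [mul_div_assoc', ← sum_div, Nat.cast_add, add_mul, sum_add_distrib,
    ← mul_sum, total]
  field_simp
  linear_combination moment

end Nat

theorem stmt_9 (m ℓ t R : ℕ) (hm : m ≤ ℓ) (hℓ : ℓ - m ≤ 2*t) (ht : t ≤ R) :
    ∑ n ∈ Finset.Icc ℓ (2*R - 2*t + ℓ),
      (n : ℚ) * (((n - m).choose (ℓ - m) * (2*R + m - n).choose (2*t + m - ℓ) : ℚ)
                  / ((2*R + 1).choose (2*t + 1) : ℚ))
      = (ℓ : ℚ) + ((ℓ : ℚ) - (m : ℚ) + 1) * ((R : ℚ) - (t : ℚ)) / ((t : ℚ) + 1) := by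
  set a := ℓ - m
  set b := 2 * t - a
  set K := 2 * R - 2 * t
  have weights : ∀ k ∈ range (K + 1),
      ((ℓ + k : ℕ) : ℚ) * (((ℓ + k - m).choose a * (2 * R + m - (ℓ + k)).choose (2 * t + m - ℓ)
        : ℚ) / ((2 * R + 1).choose (2 * t + 1) : ℚ))
      = ((ℓ + k : ℕ) : ℚ) *
        ((a + k).choose a * (b + (K - k)).choose b / (a + b + 1 + K).choose (a + b + 1) : ℚ) := by
    intro k hk
    rw [mem_range] at hk
    rw [show ℓ + k - m = a + k by omega, show 2 * R + m - (ℓ + k) = b + (K - k) by omega,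
      show 2 * t + m - ℓ = b by omega, show 2 * R + 1 = a + b + 1 + K by omega,
      show 2 * t + 1 = a + b + 1 by omega]
  have ha : (a : ℚ) = ℓ - m := by push_cast [a, Nat.cast_sub hm]; ring
  have hab : (a : ℚ) + b + 2 = 2 * (t + 1) := by
    exact_mod_cast (show a + b + 2 = 2 * (t + 1) by omega)
  have hK : (K : ℚ) = 2 * (R - t) := by
    push_cast [K, Nat.cast_sub (show 2 * t ≤ 2 * R by omega)]; ring
  rw [show 2 * R - 2 * t + ℓ = ℓ + K by omega, ← Ico_add_one_right_eq_Icc, sum_Ico_eq_sum_range,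
    show ℓ + K + 1 - ℓ = K + 1 by omega, sum_congr rfl weights,
    Nat.sum_range_add_mul_choose_mul_choose_div, hab, ha, hK]
  field_simp
end

section
/- Expected value of the second estimator: if N has pmf p(n) = C(Cap - n + m, Cap - n) * C(n - m, n - ℓ) / C(Cap + 1, ℓ + 1) on n ∈ {ℓ, ..., Cap}, then E[N] = ℓ + (ℓ - m + 1)(Cap - ℓ)/(ℓ + 2). -/
/-!
Put `n = ℓ + k`, `d = Cap - ℓ`, `r = ℓ - m`. The weight of `n` is `C(r + k, r) * C(m + d - k, m)`,
and summing such products over `k` is the upper Chu–Vandermonde identity, read off from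
`(1 - X)⁻¹ ^ (r + 1) * (1 - X)⁻¹ ^ (m + 1) = (1 - X)⁻¹ ^ (r + m + 2)`: the total mass is
`C(Cap + 1, ℓ + 1)`. As `(r + 1 + k) * C(r + k, r) = (r + 1) * C(r + 1 + k, r + 1)`, the same
identity with `r + 1` for `r` gives `∑ (n + 1 - m) * weight = (r + 1) * C(Cap + 2, ℓ + 2)`, and
`(ℓ + 2) * C(Cap + 2, ℓ + 2) = (Cap + 2) * C(Cap + 1, ℓ + 1)` yields the closed form.
-/

open Finset PowerSeries

theorem sum_range_add_choose_mul_add_choose (a b d : ℕ) :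
    ∑ k ∈ range (d + 1), (a + k).choose a * (b + (d - k)).choose b
      = (a + b + 1 + d).choose (a + b + 1) := by
  have h := congrArg (coeff d ∘ Units.val) (invOneSubPow_add ℤ (a + 1) (b + 1))
  rw [show a + 1 + (b + 1) = a + b + 1 + 1 by ring] at h
  simp only [Function.comp, Units.val_mul, invOneSubPow_val_succ_eq_mk_add_choose, coeff_mk,
    coeff_mul, Nat.sum_antidiagonal_eq_sum_range_succ
      (fun i j => ((a + i).choose a : ℤ) * (b + j).choose b)] at h
  exact_mod_cast h.symm

theorem sum_range_add_one_add_mul_add_choose_mul_add_choose (a b d : ℕ) :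
    ∑ k ∈ range (d + 1), (a + 1 + k) * ((a + k).choose a * (b + (d - k)).choose b)
      = (a + 1) * (a + b + 2 + d).choose (a + b + 2) := by
  have h := sum_range_add_choose_mul_add_choose (a + 1) b d
  rw [show a + 1 + b + 1 = a + b + 2 by ring] at h
  rw [← h, mul_sum]
  refine sum_congr rfl fun k _ => ?_
  rw [← mul_assoc, ← mul_assoc, show a + 1 + k = a + k + 1 by ring, Nat.add_one_mul_choose_eq]
  ring

def negHypergeomWeight (Cap ℓ m n : ℕ) : ℕ :=
  (Cap - n + m).choose (Cap - n) * (n - m).choose (n - ℓ)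

section negHypergeomWeight

variable {Cap ℓ m : ℕ}

theorem sum_Icc_negHypergeomWeight_eq_sum_range {M : Type*} [AddCommMonoid M] (f : ℕ → ℕ → M)
    (hm : m ≤ ℓ) (hℓ : ℓ ≤ Cap) :
    ∑ n ∈ Icc ℓ Cap, f n (negHypergeomWeight Cap ℓ m n)
      = ∑ k ∈ range (Cap - ℓ + 1),
          f (ℓ + k) ((ℓ - m + k).choose (ℓ - m) * (m + (Cap - ℓ - k)).choose m) := by
  rw [← Ico_add_one_right_eq_Icc, sum_Ico_eq_sum_range, show Cap + 1 - ℓ = Cap - ℓ + 1 by omega]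
  refine sum_congr rfl fun k hk => ?_
  have hkd : k ≤ Cap - ℓ := Nat.lt_succ_iff.mp (mem_range.mp hk)
  rw [negHypergeomWeight, mul_comm, show ℓ + k - m = ℓ - m + k by omega,
    show ℓ + k - ℓ = k by omega, show Cap - (ℓ + k) = Cap - ℓ - k by omega,
    ← Nat.choose_symm_add, add_comm _ m, ← Nat.choose_symm_add]

theorem sum_Icc_negHypergeomWeight (hm : m ≤ ℓ) (hℓ : ℓ ≤ Cap) :
    ∑ n ∈ Icc ℓ Cap, negHypergeomWeight Cap ℓ m n = (Cap + 1).choose (ℓ + 1) := by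
  rw [sum_Icc_negHypergeomWeight_eq_sum_range (fun _ w => w) hm hℓ,
    sum_range_add_choose_mul_add_choose]
  congr 1 <;> omega

theorem sum_Icc_add_one_sub_mul_negHypergeomWeight (hm : m ≤ ℓ) (hℓ : ℓ ≤ Cap) :
    ∑ n ∈ Icc ℓ Cap, (n + 1 - m) * negHypergeomWeight Cap ℓ m n
      = (ℓ + 1 - m) * (Cap + 2).choose (ℓ + 2) := by
  have h := sum_range_add_one_add_mul_add_choose_mul_add_choose (ℓ - m) m (Cap - ℓ)
  rw [show ℓ - m + m + 2 + (Cap - ℓ) = Cap + 2 by omega, show ℓ - m + m + 2 = ℓ + 2 by omega,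
    show ℓ - m + 1 = ℓ + 1 - m by omega] at h
  rw [sum_Icc_negHypergeomWeight_eq_sum_range (fun n w => (n + 1 - m) * w) hm hℓ, ← h]
  refine sum_congr rfl fun k _ => ?_
  rw [show ℓ + k + 1 - m = ℓ + 1 - m + k by omega]

end negHypergeomWeight

theorem stmt_12 (Cap ℓ m : ℕ) (hm : m ≤ ℓ) (hℓ : ℓ ≤ Cap) :
    ∑ n ∈ Finset.Icc ℓ Cap,
      (n : ℚ) * (((Cap - n + m).choose (Cap - n) * (n - m).choose (n - ℓ) : ℚ)
                  / ((Cap + 1).choose (ℓ + 1) : ℚ))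
      = (ℓ : ℚ) + ((ℓ : ℚ) - (m : ℚ) + 1) * ((Cap : ℚ) - (ℓ : ℚ)) / ((ℓ : ℚ) + 2) := by
  have hD : ((Cap + 1).choose (ℓ + 1) : ℚ) ≠ 0 := by
    exact_mod_cast (Nat.choose_pos (by omega)).ne'
  have hpascal :
      ((Cap + 2).choose (ℓ + 2) : ℚ) * (ℓ + 2) = (Cap + 2) * (Cap + 1).choose (ℓ + 1) := by
    exact_mod_cast (Nat.add_one_mul_choose_eq (Cap + 1) (ℓ + 1)).symm
  calc
    _ = (((∑ n ∈ Icc ℓ Cap, (n + 1 - m) * negHypergeomWeight Cap ℓ m n : ℕ) : ℚ)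
          + ((m : ℚ) - 1) * ((∑ n ∈ Icc ℓ Cap, negHypergeomWeight Cap ℓ m n : ℕ) : ℚ))
        / (Cap + 1).choose (ℓ + 1) := by
      rw [Nat.cast_sum, Nat.cast_sum, mul_sum, ← sum_add_distrib, sum_div]
      refine sum_congr rfl fun n hn => ?_
      rw [Nat.cast_mul, Nat.cast_sub (by have := (mem_Icc.mp hn).1; omega), negHypergeomWeight]
      push_cast
      ring
    _ = _ := by
      rw [sum_Icc_add_one_sub_mul_negHypergeomWeight hm hℓ, sum_Icc_negHypergeomWeight hm hℓ,
        Nat.cast_mul, Nat.cast_sub (by omega)]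
      push_cast
      field_simp
      linear_combination ((ℓ : ℚ) + 1 - m) * hpascal
end
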